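/- arXiv:2305.15970 — 5 statements merged into one kernel-verified Lean document; each statement's English description precedes it below -/
import Mathlib

section
/- Let ⟨·,·⟩ be an inner product on the space of complex polynomials and suppose the multiplication operator D: p(z) ↦ z·p(z) is bounded with operator norm ‖D‖. If φₙ is a polynomial of degree n orthogonal to all polynomials of degree less than n (with respect to this inner product) and z₀ is a zero of φₙ, then |z₀| < ‖D‖. -/
/-!
Divide out the root: `φ = (X - z₀) q` with `deg q < n`, so `X q = φ + z₀ q` with `φ ⟂ q`.
By Pythagoras `‖X q‖² = ‖φ‖² + |z₀|² ‖q‖² > |z₀|² ‖q‖²`, while `‖X q‖² ≤ ‖D‖² ‖q‖²`.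
-/

open Polynomial ComplexConjugate

section Sesquilinear

variable {V : Type*} {ip : V → V → ℂ}

theorem ip_add_right [Add V] (hadd : ∀ u v w : V, ip (u + v) w = ip u w + ip v w)
    (hsymm : ∀ u v : V, ip v u = conj (ip u v)) (u v w : V) :
    ip u (v + w) = ip u v + ip u w := by
  rw [hsymm, hadd, map_add, ← hsymm, ← hsymm]

theorem ip_smul_right [SMul ℂ V] (hsmul : ∀ (a : ℂ) (u v : V), ip (a • u) v = a * ip u v)
    (hsymm : ∀ u v : V, ip v u = conj (ip u v)) (a : ℂ) (u v : V) :
    ip u (a • v) = conj a * ip u v := by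
  rw [hsymm, hsmul, map_mul, ← hsymm]

theorem re_ip_add_smul_self_of_ip_eq_zero [Add V] [SMul ℂ V]
    (hadd : ∀ u v w : V, ip (u + v) w = ip u w + ip v w)
    (hsmul : ∀ (a : ℂ) (u v : V), ip (a • u) v = a * ip u v)
    (hsymm : ∀ u v : V, ip v u = conj (ip u v)) {u v : V} (huv : ip u v = 0) (a : ℂ) :
    (ip (u + a • v) (u + a • v)).re = (ip u u).re + ‖a‖ ^ 2 * (ip v v).re := by
  have hvu : ip v u = 0 := by rw [hsymm, huv, map_zero]
  rw [hadd, ip_add_right hadd hsymm, ip_add_right hadd hsymm, hsmul, hsmul,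
    ip_smul_right hsmul hsymm, ip_smul_right hsmul hsymm, huv, hvu, ← mul_assoc,
    Complex.mul_conj, Complex.normSq_eq_norm_sq]
  simp only [mul_zero, add_zero, zero_add, Complex.add_re, Complex.re_ofReal_mul]

end Sesquilinear

theorem X_mul_divByMonic_X_sub_C {R : Type*} [CommRing R] {p : R[X]} {z : R}
    (hz : p.IsRoot z) : X * (p /ₘ (X - C z)) = p + z • (p /ₘ (X - C z)) := by
  rw [smul_eq_C_mul]
  linear_combination (mul_divByMonic_eq_iff_isRoot.mpr hz)

/-- If the multiplication operator is bounded with norm `Dn` for an inner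
product on complex polynomials, then every zero `z₀` of the `n`-th orthogonal polynomial
satisfies `|z₀| < Dn`. -/
theorem stmt_0 (ip : Polynomial ℂ → Polynomial ℂ → ℂ)
    (hadd : ∀ p q r : Polynomial ℂ, ip (p + q) r = ip p r + ip q r)
    (hsmul : ∀ (a : ℂ) (p q : Polynomial ℂ), ip (a • p) q = a * ip p q)
    (hsymm : ∀ p q : Polynomial ℂ, ip q p = (starRingEnd ℂ) (ip p q))
    (hdef : ∀ p : Polynomial ℂ, p ≠ 0 → 0 < (ip p p).re)
    (Dn : ℝ) (hDn : 0 ≤ Dn)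
    (hbound : ∀ p : Polynomial ℂ, (ip (X * p) (X * p)).re ≤ Dn ^ 2 * (ip p p).re)
    (n : ℕ) (φ : Polynomial ℂ) (hφ : φ ≠ 0) (hdeg : φ.natDegree = n)
    (horth : ∀ q : Polynomial ℂ, q.degree < n → ip φ q = 0)
    (z₀ : ℂ) (hz₀ : φ.eval z₀ = 0) :
    ‖z₀‖ < Dn := by
  set q := φ /ₘ (X - C z₀)
  have hXq : X * q = φ + z₀ • q := X_mul_divByMonic_X_sub_C hz₀
  have hq : q ≠ 0 := fun h ↦ hφ (by simpa [h] using hXq.symm)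
  have hdegq : q.degree < n := hdeg ▸
    (degree_divByMonic_lt φ _ hφ (by simp)).trans_le degree_le_natDegree
  have hpyth := re_ip_add_smul_self_of_ip_eq_zero hadd hsmul hsymm (horth q hdegq) z₀
  have hbq := hbound q
  rw [hXq, hpyth] at hbq
  have hsq : ‖z₀‖ ^ 2 < Dn ^ 2 :=
    lt_of_mul_lt_mul_right (by linarith [hdef φ hφ]) (hdef q hq).le
  exact lt_of_pow_lt_pow_left₀ 2 hDn hsq
end

section
/- Let μ₀ be the normalized Lebesgue (arclength) measure on the unit circle {|z| = 1} and μ₁ the normalized Lebesgue measure on the circle {|z| = 1/2}. Then for every complex polynomial p, ∫|p|² dμ₁ ≤ ∫|p|² dμ₀ (so (μ₀,μ₁) is matrix sequentially dominated), but there is no constant C > 0 with μ₁ ≤ C μ₀ as measures. -/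
set_option maxHeartbeats 400000

open Polynomial MeasureTheory Real Complex Finset

lemma term_integral (w : ℂ) (j k : ℕ) :
    ∫ θ : ℝ in (0:ℝ)..(2*π), w * Complex.exp ((((j:ℂ) - k) * Complex.I) * θ)
      = if j = k then (2*π : ℝ) * w else 0 := by
  by_cases h : j = k
  · subst h
    simp [intervalIntegral.integral_const, mul_comm]
  · have hc : ((j:ℂ) - k) * Complex.I ≠ 0 := by
      simp only [ne_eq, mul_eq_zero, Complex.I_ne_zero, or_false, sub_eq_zero]
      exact_mod_cast h
    rw [intervalIntegral.integral_const_mul, integral_exp_mul_complex hc]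
    have h2 : Complex.exp ((((j:ℂ) - k) * Complex.I) * (2*π)) = 1 := by
      have := Complex.exp_int_mul_two_pi_mul_I ((j:ℤ) - k)
      rw [← this]
      push_cast
      ring_nf
    simp [h2, h]


lemma sum_int (n : ℕ) (a : ℕ → ℂ) (r : ℝ) :
    ∫ θ : ℝ in (0:ℝ)..(2*π), ∑ j ∈ Finset.range n, ∑ k ∈ Finset.range n, (a j * (starRingEnd ℂ) (a k) * (r:ℂ)^(j+k)) * Complex.exp ((((j:ℂ) - k) * Complex.I) * θ)
      = ((2*π * ∑ j ∈ Finset.range n, ‖a j‖^2 * r^(2*j) : ℝ) : ℂ) := by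
  have hint : ∀ j k : ℕ, IntervalIntegrable
      (fun θ : ℝ => (a j * (starRingEnd ℂ) (a k) * (r:ℂ)^(j+k)) * Complex.exp ((((j:ℂ) - k) * Complex.I) * θ)) volume 0 (2*π) := by
    intro j k
    exact ((continuous_const.mul (Complex.continuous_exp.comp
      (continuous_const.mul Complex.continuous_ofReal))).intervalIntegrable _ _)
  have hint2 : ∀ j ∈ Finset.range n, IntervalIntegrable
      (fun θ : ℝ => ∑ k ∈ Finset.range n, (a j * (starRingEnd ℂ) (a k) * (r:ℂ)^(j+k)) * Complex.exp ((((j:ℂ) - k) * Complex.I) * θ)) volume 0 (2*π) :=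
    fun j _ => (Continuous.intervalIntegrable (continuous_finset_sum _
      (fun k _ => continuous_const.mul (Complex.continuous_exp.comp
        (continuous_const.mul Complex.continuous_ofReal)))) _ _)
  have hdiag : ∀ j ∈ Finset.range n,
      (∫ θ : ℝ in (0:ℝ)..(2*π), ∑ k ∈ Finset.range n, (a j * (starRingEnd ℂ) (a k) * (r:ℂ)^(j+k)) * Complex.exp ((((j:ℂ) - k) * Complex.I) * θ))
      = (((2*π : ℝ) : ℂ)) * (((‖a j‖^2 * r^(2*j) : ℝ) : ℂ)) := by
    intro j hj
    calc (∫ θ : ℝ in (0:ℝ)..(2*π), ∑ k ∈ Finset.range n, (a j * (starRingEnd ℂ) (a k) * (r:ℂ)^(j+k)) * Complex.exp ((((j:ℂ) - k) * Complex.I) * θ))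
        = ∑ k ∈ Finset.range n, ∫ θ : ℝ in (0:ℝ)..(2*π), (a j * (starRingEnd ℂ) (a k) * (r:ℂ)^(j+k)) * Complex.exp ((((j:ℂ) - k) * Complex.I) * θ) :=
          intervalIntegral.integral_finset_sum (fun k _ => hint j k)
      _ = ∑ k ∈ Finset.range n, (if j = k then
            ((2*π:ℝ):ℂ) * (a j * (starRingEnd ℂ) (a k) * (r:ℂ)^(j+k)) else 0) :=
          Finset.sum_congr rfl (fun k _ => term_integral _ j k)
      _ = ((2*π:ℝ):ℂ) * (a j * (starRingEnd ℂ) (a j) * (r:ℂ)^(j+j)) := by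
          rw [Finset.sum_ite_eq]; simp [hj]
      _ = (((2*π : ℝ) : ℂ)) * (((‖a j‖^2 * r^(2*j) : ℝ) : ℂ)) := by
          rw [Complex.mul_conj]
          push_cast [← Complex.sq_norm]
          ring_nf
  calc (∫ θ : ℝ in (0:ℝ)..(2*π), ∑ j ∈ Finset.range n, ∑ k ∈ Finset.range n, (a j * (starRingEnd ℂ) (a k) * (r:ℂ)^(j+k)) * Complex.exp ((((j:ℂ) - k) * Complex.I) * θ))
      = ∑ j ∈ Finset.range n, ∫ θ : ℝ in (0:ℝ)..(2*π), ∑ k ∈ Finset.range n, (a j * (starRingEnd ℂ) (a k) * (r:ℂ)^(j+k)) * Complex.exp ((((j:ℂ) - k) * Complex.I) * θ) :=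
        intervalIntegral.integral_finset_sum hint2
    _ = ∑ j ∈ Finset.range n, (((2*π : ℝ) : ℂ)) * (((‖a j‖^2 * r^(2*j) : ℝ) : ℂ)) :=
        Finset.sum_congr rfl hdiag
    _ = ((2*π * ∑ j ∈ Finset.range n, ‖a j‖^2 * r^(2*j) : ℝ) : ℂ) := by
        push_cast
        rw [Finset.mul_sum]

lemma radial (p : Polynomial ℂ) (r : ℝ) :
    ∫ θ : ℝ in (0:ℝ)..(2*π), ‖p.eval ((r:ℂ) * Complex.exp (θ * Complex.I))‖^2
      = 2*π * ∑ j ∈ Finset.range (p.natDegree+1), ‖p.coeff j‖^2 * r^(2*j) := by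
  set n := p.natDegree + 1 with hn
  set a : ℕ → ℂ := fun j => p.coeff j with ha
  have hpt : ∀ θ : ℝ, (‖p.eval ((r:ℂ) * Complex.exp (θ * Complex.I))‖^2 : ℝ)
      = ((fun θ : ℝ => ∑ j ∈ Finset.range n, ∑ k ∈ Finset.range n, (a j * (starRingEnd ℂ) (a k) * (r:ℂ)^(j+k)) * Complex.exp ((((j:ℂ) - k) * Complex.I) * θ)) θ).re := by
    intro θ
    have hev : p.eval ((r:ℂ) * Complex.exp (θ * Complex.I))
        = ∑ j ∈ Finset.range n, a j * ((r:ℂ) * Complex.exp (θ * Complex.I))^j :=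
      p.eval_eq_sum_range _
    have hnorm : ∀ w : ℂ, (‖w‖^2 : ℝ) = (w * (starRingEnd ℂ) w).re := by
      intro w; rw [Complex.mul_conj]
      simp [← Complex.sq_norm, ← Complex.ofReal_pow]
    rw [hev, hnorm]
    congr 1
    rw [map_sum, Finset.sum_mul_sum]
    refine Finset.sum_congr rfl fun j _ => Finset.sum_congr rfl fun k _ => ?_
    have hce : (starRingEnd ℂ) (Complex.exp (θ * Complex.I))
        = Complex.exp (-(θ * Complex.I)) := by
      rw [← Complex.exp_conj]; congr 1; simp
    have hexp : Complex.exp ((j:ℂ) * (↑θ * Complex.I)) * Complex.exp ((k:ℂ) * -(↑θ * Complex.I))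
        = Complex.exp (((j:ℂ) - k) * Complex.I * ↑θ) := by
      rw [← Complex.exp_add]; ring_nf
    rw [map_mul, map_pow, map_mul, Complex.conj_ofReal, hce, mul_pow, mul_pow,
      ← Complex.exp_nat_mul, ← Complex.exp_nat_mul, pow_add, ← hexp]
    ring
  have hint : ∀ j k : ℕ, IntervalIntegrable
      (fun θ : ℝ => (a j * (starRingEnd ℂ) (a k) * (r:ℂ)^(j+k))
        * Complex.exp ((((j:ℂ) - k) * Complex.I) * θ)) volume 0 (2*π) := by
    intro j k
    exact ((continuous_const.mul (Complex.continuous_exp.comp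
      (continuous_const.mul Complex.continuous_ofReal))).intervalIntegrable _ _)
  have hFint : IntervalIntegrable (fun θ : ℝ => ∑ j ∈ Finset.range n, ∑ k ∈ Finset.range n, (a j * (starRingEnd ℂ) (a k) * (r:ℂ)^(j+k)) * Complex.exp ((((j:ℂ) - k) * Complex.I) * θ)) volume 0 (2*π) :=
    (Continuous.intervalIntegrable (continuous_finset_sum _ (fun j _ => continuous_finset_sum _
      (fun k _ => continuous_const.mul (Complex.continuous_exp.comp
        (continuous_const.mul Complex.continuous_ofReal))))) _ _)
  have h1 : ∫ θ : ℝ in (0:ℝ)..(2*π), ‖p.eval ((r:ℂ) * Complex.exp (θ * Complex.I))‖^2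
      = ∫ θ : ℝ in (0:ℝ)..(2*π), ((fun θ : ℝ => ∑ j ∈ Finset.range n, ∑ k ∈ Finset.range n, (a j * (starRingEnd ℂ) (a k) * (r:ℂ)^(j+k)) * Complex.exp ((((j:ℂ) - k) * Complex.I) * θ)) θ).re :=
    intervalIntegral.integral_congr (fun θ _ => hpt θ)
  have h2 : ∫ θ : ℝ in (0:ℝ)..(2*π), ((fun θ : ℝ => ∑ j ∈ Finset.range n, ∑ k ∈ Finset.range n, (a j * (starRingEnd ℂ) (a k) * (r:ℂ)^(j+k)) * Complex.exp ((((j:ℂ) - k) * Complex.I) * θ)) θ).re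
      = (∫ θ : ℝ in (0:ℝ)..(2*π), (fun θ : ℝ => ∑ j ∈ Finset.range n, ∑ k ∈ Finset.range n, (a j * (starRingEnd ℂ) (a k) * (r:ℂ)^(j+k)) * Complex.exp ((((j:ℂ) - k) * Complex.I) * θ)) θ).re := by
    simpa using Complex.reCLM.intervalIntegral_comp_comm hFint
  have h3 : ((∫ θ : ℝ in (0:ℝ)..(2*π), (fun θ : ℝ => ∑ j ∈ Finset.range n, ∑ k ∈ Finset.range n, (a j * (starRingEnd ℂ) (a k) * (r:ℂ)^(j+k)) * Complex.exp ((((j:ℂ) - k) * Complex.I) * θ)) θ).re : ℝ)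
      = 2*π * ∑ j ∈ Finset.range n, ‖a j‖^2 * r^(2*j) := by
    rw [sum_int n a r, Complex.ofReal_re]
  exact h1.trans (h2.trans h3)

/-- For `μ₀` the normalized Lebesgue measure on the unit circle and `μ₁`
the normalized Lebesgue measure on the circle of radius `1/2`, one has
`∫|p|² dμ₁ ≤ ∫|p|² dμ₀` for all polynomials (matrix sequential domination), yet there
is no `C > 0` with `μ₁ ≤ C μ₀` as measures. -/
theorem stmt_4 (μ₀ μ₁ : Measure ℂ)
    (h₀ : μ₀ = Measure.map (fun θ : ℝ => Complex.exp (θ * Complex.I))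
      ((ENNReal.ofReal (2 * π))⁻¹ • volume.restrict (Set.Ioc (0 : ℝ) (2 * π))))
    (h₁ : μ₁ = Measure.map (fun θ : ℝ => (1 / 2 : ℂ) * Complex.exp (θ * Complex.I))
      ((ENNReal.ofReal (2 * π))⁻¹ • volume.restrict (Set.Ioc (0 : ℝ) (2 * π)))) :
    (∀ p : Polynomial ℂ, ∫ z, ‖p.eval z‖ ^ 2 ∂μ₁ ≤ ∫ z, ‖p.eval z‖ ^ 2 ∂μ₀) ∧
      ¬ ∃ C : ℝ, 0 < C ∧ μ₁ ≤ (ENNReal.ofReal C) • μ₀ := by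
  have h2pi : (0:ℝ) < 2 * π := by positivity
  constructor
  · intro p
    have hmeas0 : AEMeasurable (fun θ : ℝ => Complex.exp (θ * Complex.I))
        ((ENNReal.ofReal (2 * π))⁻¹ • volume.restrict (Set.Ioc (0 : ℝ) (2 * π))) :=
      (Complex.continuous_exp.comp (Complex.continuous_ofReal.mul continuous_const)).aemeasurable
    have hmeas1 : AEMeasurable (fun θ : ℝ => (1 / 2 : ℂ) * Complex.exp (θ * Complex.I))
        ((ENNReal.ofReal (2 * π))⁻¹ • volume.restrict (Set.Ioc (0 : ℝ) (2 * π))) :=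
      (continuous_const.mul (Complex.continuous_exp.comp
        (Complex.continuous_ofReal.mul continuous_const))).aemeasurable
    have hf : ∀ μ : Measure ℂ, AEStronglyMeasurable (fun z : ℂ => ‖p.eval z‖ ^ 2) μ :=
      fun μ => ((p.continuous_aeval.norm.pow 2)).aestronglyMeasurable
    rw [h₀, h₁, integral_map hmeas1 (hf _), integral_map hmeas0 (hf _),
      integral_smul_measure, integral_smul_measure]
    have htr : ((ENNReal.ofReal (2 * π))⁻¹).toReal = (2*π)⁻¹ := by
      rw [ENNReal.toReal_inv, ENNReal.toReal_ofReal h2pi.le]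
    rw [htr]
    have hIoc : ∀ g : ℝ → ℝ, IntervalIntegrable g volume 0 (2*π) →
        ∫ θ in Set.Ioc (0:ℝ) (2*π), g θ = ∫ θ : ℝ in (0:ℝ)..(2*π), g θ :=
      fun g _ => (intervalIntegral.integral_of_le h2pi.le).symm
    have e1 : ∫ θ in Set.Ioc (0:ℝ) (2*π), ‖p.eval ((1/2 : ℂ) * Complex.exp (θ * Complex.I))‖^2
        = 2*π * ∑ j ∈ Finset.range (p.natDegree+1), ‖p.coeff j‖^2 * (1/2:ℝ)^(2*j) := by
      have hsw : (∫ θ in Set.Ioc (0:ℝ) (2*π), ‖p.eval ((1/2 : ℂ) * Complex.exp (θ * Complex.I))‖^2)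
          = ∫ θ : ℝ in (0:ℝ)..(2*π), ‖p.eval ((1/2 : ℂ) * Complex.exp (θ * Complex.I))‖^2 :=
        (intervalIntegral.integral_of_le h2pi.le).symm
      rw [hsw]
      have := radial p (1/2 : ℝ)
      push_cast at this ⊢
      exact this
    have e0 : ∫ θ in Set.Ioc (0:ℝ) (2*π), ‖p.eval (Complex.exp (θ * Complex.I))‖^2
        = 2*π * ∑ j ∈ Finset.range (p.natDegree+1), ‖p.coeff j‖^2 * (1:ℝ)^(2*j) := by
      have hsw : (∫ θ in Set.Ioc (0:ℝ) (2*π), ‖p.eval (Complex.exp (θ * Complex.I))‖^2)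
          = ∫ θ : ℝ in (0:ℝ)..(2*π), ‖p.eval (Complex.exp (θ * Complex.I))‖^2 :=
        (intervalIntegral.integral_of_le h2pi.le).symm
      rw [hsw]
      have := radial p (1 : ℝ)
      push_cast at this ⊢
      simpa using this
    rw [e1, e0, smul_eq_mul, smul_eq_mul]
    have hsum : ∑ j ∈ Finset.range (p.natDegree+1), ‖p.coeff j‖^2 * (1/2:ℝ)^(2*j)
        ≤ ∑ j ∈ Finset.range (p.natDegree+1), ‖p.coeff j‖^2 * (1:ℝ)^(2*j) := by
      refine Finset.sum_le_sum fun j _ => ?_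
      have h1 : ((1/2:ℝ))^(2*j) ≤ 1 := pow_le_one₀ (by norm_num) (by norm_num)
      have h2 : ((1:ℝ))^(2*j) = 1 := one_pow _
      nlinarith [sq_nonneg ‖p.coeff j‖]
    have : (0:ℝ) ≤ (2*π)⁻¹ := by positivity
    nlinarith [mul_le_mul_of_nonneg_left hsum h2pi.le]
  · rintro ⟨C, -, hle⟩
    set S : Set ℂ := Metric.sphere (0:ℂ) (1/2) with hS
    have hSm : MeasurableSet S := Metric.isClosed_sphere.measurableSet
    have hμ₁S : μ₁ S = 1 := by
      rw [h₁, Measure.map_apply (by measurability) hSm]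
      have : (fun θ : ℝ => (1 / 2 : ℂ) * Complex.exp (θ * Complex.I)) ⁻¹' S = Set.univ := by
        ext θ
        simp [hS, Complex.norm_exp_ofReal_mul_I, Complex.dist_eq]
      rw [this, Measure.smul_apply, Measure.restrict_apply MeasurableSet.univ,
        Set.univ_inter, Real.volume_Ioc, smul_eq_mul, sub_zero]
      exact ENNReal.inv_mul_cancel (ne_of_gt (ENNReal.ofReal_pos.2 h2pi)) ENNReal.ofReal_ne_top
    have hμ₀S : μ₀ S = 0 := by
      rw [h₀, Measure.map_apply (by measurability) hSm]
      have : (fun θ : ℝ => Complex.exp (θ * Complex.I)) ⁻¹' S = ∅ := by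
        ext θ
        simp [hS, Complex.norm_exp_ofReal_mul_I, Complex.dist_eq]
      rw [this]
      simp
    have := hle S
    rw [hμ₁S, Measure.smul_apply, hμ₀S] at this
    simp at this
end

section
/- Let ⟨·,·⟩₀,…,⟨·,·⟩_k be inner products (possibly semi-definite for j ≥ 1, with ⟨·,·⟩₀ definite) on complex polynomials such that (i) there are constants C_j > 0 with ⟨p,p⟩_j ≤ C_j ⟨p,p⟩_{j-1} for all polynomials p and all j = 1,…,k, and (ii) for each j the multiplication operator p ↦ z·p is bounded with respect to ⟨·,·⟩_j with norm ‖D_j‖. Define the Sobolev inner product ⟨p,q⟩_S = Σ_{j=0}^{k} ⟨p^{(j)}, q^{(j)}⟩_j. Then the multiplication operator p ↦ z·p is bounded on (ℙ[z], ⟨·,·⟩_S). -/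
open Polynomial

lemma iter_deriv_X_mul (n : ℕ) (p : Polynomial ℂ) :
    derivative^[n + 1] (X * p) =
      ((n : ℂ) + 1) • derivative^[n] p + X * derivative^[n + 1] p := by
  induction n with
  | zero => simp [derivative_mul]
  | succ n ih =>
      simp only [Function.iterate_succ_apply' derivative (n + 1)] 
      rw [ih]
      simp only [map_add, map_smul, derivative_mul, derivative_X, one_mul, Nat.cast_add,
        Nat.cast_one]
      rw [← Function.iterate_succ_apply' derivative n p]
      module

lemma aux_smulsq (f : Polynomial ℂ → Polynomial ℂ → ℂ)
    (hsmul : ∀ (a : ℂ) (p q : Polynomial ℂ), f (a • p) q = a * f p q)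
    (hsymm : ∀ p q : Polynomial ℂ, f q p = (starRingEnd ℂ) (f p q))
    (r : ℝ) (a : Polynomial ℂ) :
    (f ((r : ℂ) • a) ((r : ℂ) • a)).re = r ^ 2 * (f a a).re := by
  have h1 : f ((r:ℂ) • a) ((r:ℂ) • a) = (r:ℂ) * f a ((r:ℂ) • a) := hsmul _ _ _
  have h2 : f a ((r:ℂ) • a) = (starRingEnd ℂ) ((r:ℂ) * f a a) := by
    rw [hsymm, hsmul]
  have h3 : (starRingEnd ℂ) (f a a) = f a a := (hsymm a a).symm
  rw [h1, h2, map_mul, h3, Complex.conj_ofReal, ← mul_assoc, ← Complex.ofReal_mul,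
    Complex.re_ofReal_mul, ← pow_two]

lemma aux_addsq (f : Polynomial ℂ → Polynomial ℂ → ℂ)
    (hadd : ∀ p q r : Polynomial ℂ, f (p + q) r = f p r + f q r)
    (hsmul : ∀ (a : ℂ) (p q : Polynomial ℂ), f (a • p) q = a * f p q)
    (hsymm : ∀ p q : Polynomial ℂ, f q p = (starRingEnd ℂ) (f p q))
    (hnn : ∀ p : Polynomial ℂ, 0 ≤ (f p p).re)
    (a b : Polynomial ℂ) :
    (f (a + b) (a + b)).re ≤ 2 * (f a a).re + 2 * (f b b).re := by
  have hadd2 : ∀ p q r : Polynomial ℂ, f p (q + r) = f p q + f p r := by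
    intro p q r
    rw [hsymm, hadd, map_add, ← hsymm, ← hsymm]
  have hsmul2 : ∀ (c : ℂ) (p q : Polynomial ℂ), f p (c • q) = (starRingEnd ℂ) c * f p q := by
    intro c p q
    rw [hsymm, hsmul, map_mul, ← hsymm]
  have expand : ∀ u v : Polynomial ℂ, f (u + v) (u + v) = f u u + f u v + f v u + f v v := by
    intro u v
    rw [hadd, hadd2, hadd2]; ring
  have key : 0 ≤ (f (a + (-1 : ℂ) • b) (a + (-1 : ℂ) • b)).re := hnn _
  rw [expand] at key
  have e1 : f a ((-1 : ℂ) • b) = - f a b := by rw [hsmul2]; simp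
  have e2 : f ((-1 : ℂ) • b) a = - f b a := by rw [hsmul]; ring
  have e3 : f ((-1 : ℂ) • b) ((-1 : ℂ) • b) = f b b := by rw [hsmul, hsmul2]; simp
  rw [e1, e2, e3] at key
  rw [expand]
  simp only [Complex.add_re, Complex.neg_re] at key ⊢
  linarith

/-- If semi-inner products `⟨·,·⟩₀,…,⟨·,·⟩_k` (with `⟨·,·⟩₀` definite)
are sequentially dominated and each multiplication operator is bounded, then the
multiplication operator is bounded for the Sobolev inner product
`⟨p,q⟩_S = Σ_j ⟨p⁽ʲ⁾, q⁽ʲ⁾⟩_j`. -/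
theorem stmt_5 (k : ℕ) (ip : Fin (k + 1) → Polynomial ℂ → Polynomial ℂ → ℂ)
    (hadd : ∀ j, ∀ p q r : Polynomial ℂ, ip j (p + q) r = ip j p r + ip j q r)
    (hsmul : ∀ j, ∀ (a : ℂ) (p q : Polynomial ℂ), ip j (a • p) q = a * ip j p q)
    (hsymm : ∀ j, ∀ p q : Polynomial ℂ, ip j q p = (starRingEnd ℂ) (ip j p q))
    (hnonneg : ∀ j, ∀ p : Polynomial ℂ, 0 ≤ (ip j p p).re)
    (hdef0 : ∀ p : Polynomial ℂ, p ≠ 0 → 0 < (ip 0 p p).re)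
    (C : Fin k → ℝ) (hCpos : ∀ j, 0 < C j)
    (hdom : ∀ j : Fin k, ∀ p : Polynomial ℂ,
      (ip j.succ p p).re ≤ C j * (ip j.castSucc p p).re)
    (D : Fin (k + 1) → ℝ) (hDpos : ∀ j, 0 ≤ D j)
    (hbound : ∀ j, ∀ p : Polynomial ℂ,
      (ip j (X * p) (X * p)).re ≤ (D j) ^ 2 * (ip j p p).re) :
    ∃ K : ℝ, 0 < K ∧ ∀ p : Polynomial ℂ,
      (∑ j : Fin (k + 1), (ip j (derivative^[j.val] (X * p)) (derivative^[j.val] (X * p))).re)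
        ≤ K ^ 2 *
          ∑ j : Fin (k + 1), (ip j (derivative^[j.val] p) (derivative^[j.val] p)).re := by
  obtain ⟨Cs, hCs⟩ : ∃ Cs : ℝ, Cs = ∑ i : Fin k, C i := ⟨_, rfl⟩
  obtain ⟨Ds, hDs⟩ : ∃ Ds : ℝ, Ds = ∑ j : Fin (k + 1), (D j) ^ 2 := ⟨_, rfl⟩
  have hCs0 : 0 ≤ Cs := by
    rw [hCs]; exact Finset.sum_nonneg fun i _ => (hCpos i).le
  have hDs0 : 0 ≤ Ds := by
    rw [hDs]; exact Finset.sum_nonneg fun i _ => sq_nonneg _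
  have hCle : ∀ i : Fin k, C i ≤ Cs := by
    intro i; rw [hCs]
    exact Finset.single_le_sum (fun j _ => (hCpos j).le) (Finset.mem_univ i)
  have hDle : ∀ j : Fin (k + 1), (D j) ^ 2 ≤ Ds := by
    intro j; rw [hDs]
    exact Finset.single_le_sum (f := fun i : Fin (k + 1) => (D i) ^ 2) (fun i _ => sq_nonneg _) (Finset.mem_univ j)
  obtain ⟨B, hB⟩ : ∃ B : ℝ, B = 2 * ((k : ℝ) + 1) ^ 2 * Cs + 2 * Ds := ⟨_, rfl⟩
  have hB0 : 0 ≤ B := by rw [hB]; positivity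
  refine ⟨Real.sqrt (((k : ℝ) + 1) * B + 1), Real.sqrt_pos.mpr (by positivity), ?_⟩
  intro p
  rw [Real.sq_sqrt (by positivity)]
  obtain ⟨S, hSdef⟩ : ∃ S : ℝ,
      S = ∑ j : Fin (k + 1), (ip j (derivative^[j.val] p) (derivative^[j.val] p)).re := ⟨_, rfl⟩
  have hSle : ∀ j : Fin (k + 1),
      (ip j (derivative^[j.val] p) (derivative^[j.val] p)).re ≤ S := by
    intro j; rw [hSdef]
    exact Finset.single_le_sum
      (f := fun i : Fin (k + 1) => (ip i (derivative^[i.val] p) (derivative^[i.val] p)).re)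
      (fun i _ => hnonneg i _) (Finset.mem_univ j)
  have hS0 : 0 ≤ S := by
    rw [hSdef]; exact Finset.sum_nonneg fun i _ => hnonneg i _
  have hterm : ∀ j : Fin (k + 1),
      (ip j (derivative^[j.val] (X * p)) (derivative^[j.val] (X * p))).re ≤ B * S := by
    intro j
    induction j using Fin.cases with
    | zero =>
        simp only [Fin.val_zero, Function.iterate_zero, id_eq]
        calc (ip 0 (X * p) (X * p)).re ≤ (D 0) ^ 2 * (ip 0 p p).re := hbound 0 p
          _ ≤ Ds * S := by
              have h0 := hSle 0
              simp only [Fin.val_zero, Function.iterate_zero, id_eq] at h0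
              exact mul_le_mul (hDle 0) h0 (hnonneg 0 p) hDs0
          _ ≤ B * S := by
              refine mul_le_mul_of_nonneg_right ?_ hS0
              nlinarith [mul_nonneg (sq_nonneg ((k : ℝ) + 1)) hCs0]
    | succ i =>
        have hv : (Fin.succ i).val = i.val + 1 := rfl
        have hq : derivative^[(Fin.succ i).val] (X * p) =
            (((i.val + 1 : ℕ) : ℝ) : ℂ) • derivative^[i.val] p
              + X * derivative^[i.val + 1] p := by
          rw [hv, iter_deriv_X_mul]
          norm_num
        rw [hq]
        set q := derivative^[i.val] p with hqdef
        set q' := derivative^[i.val + 1] p with hq'def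
        have ha := aux_addsq (ip (Fin.succ i)) (hadd _) (hsmul _) (hsymm _) (hnonneg _)
          ((((i.val + 1 : ℕ) : ℝ) : ℂ) • q) (X * q')
        rw [aux_smulsq (ip (Fin.succ i)) (hsmul _) (hsymm _)] at ha
        have hb := hbound (Fin.succ i) q'
        have hc : (ip (Fin.succ i) q q).re ≤ Cs * S := by
          refine le_trans (hdom i q) ?_
          have h1 := hSle i.castSucc
          have h2 : i.castSucc.val = i.val := rfl
          rw [h2] at h1
          exact mul_le_mul (hCle i) h1 (hnonneg _ _) hCs0
        have hr : ((i.val + 1 : ℕ) : ℝ) ≤ (k : ℝ) + 1 := by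
          have h := (Nat.cast_lt (α := ℝ)).mpr i.isLt
          push_cast
          linarith
        have t2 : ((i.val + 1 : ℕ) : ℝ) ^ 2 * (ip (Fin.succ i) q q).re
            ≤ ((k : ℝ) + 1) ^ 2 * (Cs * S) := by
          refine mul_le_mul (pow_le_pow_left₀ (by positivity) hr 2) hc (hnonneg _ _)
            (by positivity)
        have h3 := hSle (Fin.succ i)
        rw [hv, ← hq'def] at h3
        have t3 : (D (Fin.succ i)) ^ 2 * (ip (Fin.succ i) q' q').re ≤ Ds * S :=
          mul_le_mul (hDle _) h3 (hnonneg _ _) hDs0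
        have hBS : B * S = 2 * (((k : ℝ) + 1) ^ 2 * (Cs * S)) + 2 * (Ds * S) := by
          rw [hB]; ring
        linarith [ha, hb, t2, t3]
  calc (∑ j : Fin (k + 1),
        (ip j (derivative^[j.val] (X * p)) (derivative^[j.val] (X * p))).re)
      ≤ ∑ _j : Fin (k + 1), B * S := Finset.sum_le_sum fun j _ => hterm j
    _ = ((k : ℝ) + 1) * (B * S) := by
        rw [Finset.sum_const, Finset.card_univ, Fintype.card_fin]
        push_cast [nsmul_eq_mul]
        ring
    _ ≤ (((k : ℝ) + 1) * B + 1) * S := by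
        have : (((k : ℝ) + 1) * B + 1) * S = ((k : ℝ) + 1) * (B * S) + S := by ring
        linarith
    _ = (((k : ℝ) + 1) * B + 1) *
        ∑ j : Fin (k + 1), (ip j (derivative^[j.val] p) (derivative^[j.val] p)).re := by
        rw [hSdef]
end

section
/- Let ⟨·,·⟩₀,…,⟨·,·⟩_k be semi-inner products on complex polynomials (with ⟨·,·⟩₀ positive definite) satisfying ⟨p,p⟩_j ≤ C_j ⟨p,p⟩_{j-1} for all p and all j = 1,…,k, and suppose each multiplication operator D_j is bounded. Then the set of all zeros of all orthogonal polynomials with respect to the Sobolev inner product ⟨p,q⟩_S = Σ_{j=0}^k ⟨p^{(j)}, q^{(j)}⟩_j is a bounded subset of ℂ. -/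
/-!
The Sobolev form is a semi-inner product, definite because its `0`-th term is, and multiplication
by `X` is bounded for it: `(X p)⁽ʲ⁾ = X p⁽ʲ⁾ + j p⁽ʲ⁻¹⁾`, the first term is controlled by the
bound on `D_j` and the second by the domination `⟨·,·⟩_j ≤ C_{j-1} ⟨·,·⟩_{j-1}`.
If `z` is a zero of an orthogonal polynomial `φ = (X - z) ψ`, orthogonality to `ψ` gives
`⟨X ψ, ψ⟩_S = z ⟨ψ, ψ⟩_S`, so by Cauchy–Schwarz `|z|` is at most the norm of multiplication by `X`.
-/

open Polynomial ComplexConjugate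

structure IsSemiInnerProduct {E : Type*} [AddCommGroup E] [Module ℂ E] (B : E → E → ℂ) :
    Prop where
  add_left : ∀ p q r, B (p + q) r = B p r + B q r
  smul_left : ∀ (a : ℂ) p q, B (a • p) q = a * B p q
  conj_symm : ∀ p q, B q p = conj (B p q)
  re_nonneg : ∀ p, 0 ≤ (B p p).re

namespace IsSemiInnerProduct

variable {E F : Type*} [AddCommGroup E] [Module ℂ E] [AddCommGroup F] [Module ℂ F]
  {B : E → E → ℂ}

theorem add_right (hB : IsSemiInnerProduct B) (p q r : E) : B p (q + r) = B p q + B p r := by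
  rw [hB.conj_symm, hB.add_left, map_add, ← hB.conj_symm, ← hB.conj_symm]

theorem smul_right (hB : IsSemiInnerProduct B) (a : ℂ) (p q : E) :
    B p (a • q) = conj a * B p q := by
  rw [hB.conj_symm, hB.smul_left, map_mul, ← hB.conj_symm]

/-- Mathlib's inner products are conjugate-linear in the first argument, hence the swap. -/
@[reducible]
def toCore (hB : IsSemiInnerProduct B) : PreInnerProductSpace.Core ℂ E where
  inner p q := B q p
  conj_inner_symm p q := (hB.conj_symm p q).symm
  re_inner_nonneg p := hB.re_nonneg p
  add_left p q r := hB.add_right r p q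
  smul_left p q a := hB.smul_right a q p

theorem norm_sq_le (hB : IsSemiInnerProduct B) (p q : E) :
    ‖B p q‖ ^ 2 ≤ (B p p).re * (B q q).re := by
  let := hB.toCore
  have h : ‖B q p‖ * ‖B p q‖ ≤ (B p p).re * (B q q).re :=
    InnerProductSpace.Core.inner_mul_inner_self_le (𝕜 := ℂ) p q
  rwa [hB.conj_symm p q, Complex.norm_conj, ← sq] at h

theorem re_add_self_le (hB : IsSemiInnerProduct B) (p q : E) :
    (B (p + q) (p + q)).re ≤ 2 * (B p p).re + 2 * (B q q).re := by
  let := hB.toCore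
  have hadd : B (p + q) (p + q) = B p p + B q p + B p q + B q q :=
    InnerProductSpace.Core.inner_add_add_self (𝕜 := ℂ) p q
  have hsub : B (p - q) (p - q) = B p p - B q p - B p q + B q q :=
    InnerProductSpace.Core.inner_sub_sub_self (𝕜 := ℂ) p q
  have := hB.re_nonneg (p - q)
  rw [hsub] at this
  rw [hadd]
  simp only [Complex.add_re, Complex.sub_re] at this ⊢
  linarith

theorem re_smul_self (hB : IsSemiInnerProduct B) (a : ℂ) (p : E) :
    (B (a • p) (a • p)).re = ‖a‖ ^ 2 * (B p p).re := by
  rw [hB.smul_left, hB.smul_right, ← mul_assoc, Complex.mul_conj', ← Complex.ofReal_pow,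
    Complex.re_ofReal_mul]

theorem ofReal_re_self (hB : IsSemiInnerProduct B) (p : E) : ((B p p).re : ℂ) = B p p :=
  Complex.conj_eq_iff_re.mp (hB.conj_symm p p).symm

theorem comp (hB : IsSemiInnerProduct B) (L : F →ₗ[ℂ] E) :
    IsSemiInnerProduct fun p q => B (L p) (L q) where
  add_left p q r := by simp only [map_add, hB.add_left]
  smul_left a p q := by simp only [map_smul, hB.smul_left]
  conj_symm p q := hB.conj_symm _ _
  re_nonneg p := hB.re_nonneg _

theorem sum {ι : Type*} [Fintype ι] {B : ι → E → E → ℂ} (hB : ∀ i, IsSemiInnerProduct (B i)) :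
    IsSemiInnerProduct fun p q => ∑ i, B i p q where
  add_left p q r := by simp only [(hB _).add_left, Finset.sum_add_distrib]
  smul_left a p q := by simp only [(hB _).smul_left, Finset.mul_sum]
  conj_symm p q := by simp only [map_sum, (hB _).conj_symm p q]
  re_nonneg p := by
    simp only [Complex.re_sum]
    exact Finset.sum_nonneg fun i _ => (hB i).re_nonneg p

end IsSemiInnerProduct

theorem IsSemiInnerProduct.norm_sq_le_of_isRoot {S : ℂ[X] → ℂ[X] → ℂ}
    (hS : IsSemiInnerProduct S) (hpos : ∀ p, p ≠ 0 → 0 < (S p p).re) {K : ℝ}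
    (hK : ∀ p, (S (X * p) (X * p)).re ≤ K * (S p p).re) {φ : ℂ[X]} (hφ : φ ≠ 0)
    (horth : ∀ q : ℂ[X], q.degree < φ.natDegree → S φ q = 0) {z : ℂ} (hz : φ.IsRoot z) :
    ‖z‖ ^ 2 ≤ K := by
  obtain ⟨ψ, rfl⟩ := dvd_iff_isRoot.mpr hz
  have hψ : ψ ≠ 0 := right_ne_zero_of_mul hφ
  have hdeg : ψ.degree < ((X - C z) * ψ).natDegree := by
    rw [natDegree_mul (X_sub_C_ne_zero z) hψ, natDegree_X_sub_C]
    exact degree_le_natDegree.trans_lt (by norm_cast; omega)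
  -- orthogonality of `(X - z) ψ` to `ψ` makes `z` a Rayleigh quotient of multiplication by `X`
  have hrayleigh : S (X * ψ) ψ = z * S ψ ψ := by
    have h := horth ψ hdeg
    rw [sub_mul, sub_eq_add_neg, ← smul_eq_C_mul, ← neg_smul, hS.add_left,
      hS.smul_left] at h
    linear_combination h
  set s := (S ψ ψ).re
  have hs : 0 < s := hpos ψ hψ
  have hcs : ‖z‖ ^ 2 * s ^ 2 ≤ K * s ^ 2 :=
    calc ‖z‖ ^ 2 * s ^ 2 = ‖S (X * ψ) ψ‖ ^ 2 := by
          rw [hrayleigh, ← hS.ofReal_re_self, norm_mul, Complex.norm_real,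
            Real.norm_of_nonneg hs.le]
          ring
      _ ≤ (S (X * ψ) (X * ψ)).re * s := hS.norm_sq_le _ _
      _ ≤ K * s * s := mul_le_mul_of_nonneg_right (hK ψ) hs.le
      _ = K * s ^ 2 := by ring
  exact le_of_mul_le_mul_right hcs (by positivity)

theorem IsSemiInnerProduct.re_iterate_derivative_X_mul_le {B : ℂ[X] → ℂ[X] → ℂ}
    (hB : IsSemiInnerProduct B) {D : ℝ} (hD : ∀ p, (B (X * p) (X * p)).re ≤ D ^ 2 * (B p p).re)
    (n : ℕ) (p : ℂ[X]) :
    (B (derivative^[n] (X * p)) (derivative^[n] (X * p))).re ≤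
      2 * D ^ 2 * (B (derivative^[n] p) (derivative^[n] p)).re +
        2 * n ^ 2 * (B (derivative^[n - 1] p) (derivative^[n - 1] p)).re := by
  rw [mul_comm X, iterate_derivative_mul_X, mul_comm _ X, ← Nat.cast_smul_eq_nsmul ℂ]
  have h := hB.re_add_self_le (X * derivative^[n] p) ((n : ℂ) • derivative^[n - 1] p)
  rw [hB.re_smul_self, Complex.norm_natCast] at h
  linarith [hD (derivative^[n] p)]

section Sobolev

variable {k : ℕ} (ip : Fin (k + 1) → ℂ[X] → ℂ[X] → ℂ)

noncomputable def sobolevForm (p q : ℂ[X]) : ℂ :=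
  ∑ j : Fin (k + 1), ip j (derivative^[j] p) (derivative^[j] q)

variable {ip}

theorem isSemiInnerProduct_sobolevForm (hip : ∀ j, IsSemiInnerProduct (ip j)) :
    IsSemiInnerProduct (sobolevForm ip) := by
  have := IsSemiInnerProduct.sum fun j => (hip j).comp (derivative ^ (j : ℕ))
  simp only [Module.End.pow_apply] at this
  exact this

theorem re_sobolevForm_self (p : ℂ[X]) :
    (sobolevForm ip p p).re = ∑ j, (ip j (derivative^[j] p) (derivative^[j] p)).re :=
  Complex.re_sum _ _

theorem re_le_re_sobolevForm_self (hnonneg : ∀ j p, 0 ≤ (ip j p p).re) (j : Fin (k + 1))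
    (p : ℂ[X]) : (ip j (derivative^[j] p) (derivative^[j] p)).re ≤ (sobolevForm ip p p).re := by
  rw [re_sobolevForm_self]
  exact Finset.single_le_sum (f := fun j => (ip j (derivative^[j] p) (derivative^[j] p)).re)
    (fun j _ => hnonneg j _) (Finset.mem_univ j)

theorem re_sobolevForm_self_pos (hnonneg : ∀ j p, 0 ≤ (ip j p p).re)
    (hdef0 : ∀ p, p ≠ 0 → 0 < (ip 0 p p).re) {p : ℂ[X]} (hp : p ≠ 0) :
    0 < (sobolevForm ip p p).re :=
  (hdef0 p hp).trans_le (re_le_re_sobolevForm_self hnonneg 0 p)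

theorem re_iterate_derivative_pred_le_sobolevForm (hnonneg : ∀ j p, 0 ≤ (ip j p p).re)
    {C : Fin k → ℝ} (hC : ∀ j, 0 ≤ C j)
    (hdom : ∀ j p, (ip j.succ p p).re ≤ C j * (ip j.castSucc p p).re)
    (j : Fin (k + 1)) (p : ℂ[X]) :
    (ip j (derivative^[j - 1] p) (derivative^[j - 1] p)).re ≤
      (1 + ∑ i, C i) * (sobolevForm ip p p).re := by
  have hS : 0 ≤ (sobolevForm ip p p).re :=
    (hnonneg 0 p).trans (re_le_re_sobolevForm_self hnonneg 0 p)
  cases j using Fin.cases with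
  | zero =>
    -- `0 - 1 = 0` in `ℕ`; this case only ever enters with the factor `0 ^ 2`
    have h := re_le_re_sobolevForm_self hnonneg 0 p
    simp only [Fin.val_zero, Nat.zero_sub, Function.iterate_zero, id] at h ⊢
    nlinarith [Finset.sum_nonneg fun i (_ : i ∈ Finset.univ) => hC i]
  | succ i =>
    have hCi : C i ≤ 1 + ∑ i, C i := by
      linarith [Finset.single_le_sum (fun i _ => hC i) (Finset.mem_univ i)]
    calc (ip i.succ (derivative^[i] p) (derivative^[i] p)).re
        ≤ C i * (ip i.castSucc (derivative^[i] p) (derivative^[i] p)).re := hdom i _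
      _ ≤ C i * (sobolevForm ip p p).re :=
        mul_le_mul_of_nonneg_left (re_le_re_sobolevForm_self hnonneg i.castSucc p) (hC i)
      _ ≤ (1 + ∑ i, C i) * (sobolevForm ip p p).re := mul_le_mul_of_nonneg_right hCi hS

theorem re_sobolevForm_X_mul_le (hip : ∀ j, IsSemiInnerProduct (ip j)) {C : Fin k → ℝ}
    (hC : ∀ j, 0 ≤ C j) (hdom : ∀ j p, (ip j.succ p p).re ≤ C j * (ip j.castSucc p p).re)
    {D : Fin (k + 1) → ℝ} (hD : ∀ j p, (ip j (X * p) (X * p)).re ≤ D j ^ 2 * (ip j p p).re)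
    (p : ℂ[X]) :
    (sobolevForm ip (X * p) (X * p)).re ≤
      (∑ j : Fin (k + 1), (2 * D j ^ 2 + 2 * (j : ℝ) ^ 2 * (1 + ∑ i, C i))) *
        (sobolevForm ip p p).re := by
  rw [re_sobolevForm_self, Finset.sum_mul]
  refine Finset.sum_le_sum fun j _ => ?_
  have hnonneg j := (hip j).re_nonneg
  have hT := re_le_re_sobolevForm_self hnonneg j p
  have hG := re_iterate_derivative_pred_le_sobolevForm hnonneg hC hdom j p
  calc _ ≤ 2 * D j ^ 2 * (ip j (derivative^[j] p) (derivative^[j] p)).re +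
        2 * (j : ℝ) ^ 2 * (ip j (derivative^[j - 1] p) (derivative^[j - 1] p)).re :=
        (hip j).re_iterate_derivative_X_mul_le (hD j) j p
    _ ≤ 2 * D j ^ 2 * (sobolevForm ip p p).re +
        2 * (j : ℝ) ^ 2 * ((1 + ∑ i, C i) * (sobolevForm ip p p).re) := by gcongr
    _ = _ := by ring

end Sobolev

theorem stmt_6_general (k : ℕ) (ip : Fin (k + 1) → Polynomial ℂ → Polynomial ℂ → ℂ)
    (hadd : ∀ j, ∀ p q r : Polynomial ℂ, ip j (p + q) r = ip j p r + ip j q r)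
    (hsmul : ∀ j, ∀ (a : ℂ) (p q : Polynomial ℂ), ip j (a • p) q = a * ip j p q)
    (hsymm : ∀ j, ∀ p q : Polynomial ℂ, ip j q p = (starRingEnd ℂ) (ip j p q))
    (hnonneg : ∀ j, ∀ p : Polynomial ℂ, 0 ≤ (ip j p p).re)
    (hdef0 : ∀ p : Polynomial ℂ, p ≠ 0 → 0 < (ip 0 p p).re)
    (C : Fin k → ℝ) (hCpos : ∀ j, 0 < C j)
    (hdom : ∀ j : Fin k, ∀ p : Polynomial ℂ,
      (ip j.succ p p).re ≤ C j * (ip j.castSucc p p).re)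
    (D : Fin (k + 1) → ℝ)
    (hbound : ∀ j, ∀ p : Polynomial ℂ,
      (ip j (X * p) (X * p)).re ≤ (D j) ^ 2 * (ip j p p).re)
    (S : Polynomial ℂ → Polynomial ℂ → ℂ)
    (hS : ∀ p q : Polynomial ℂ,
      S p q = ∑ j : Fin (k + 1), ip j (derivative^[j.val] p) (derivative^[j.val] q)) :
    ∃ R : ℝ, 0 < R ∧ ∀ (n : ℕ) (φ : Polynomial ℂ), φ ≠ 0 → φ.natDegree = n →
      (∀ q : Polynomial ℂ, q.degree < n → S φ q = 0) →
      ∀ z₀ : ℂ, φ.eval z₀ = 0 → ‖z₀‖ < R := by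
  obtain rfl : S = sobolevForm ip := funext₂ hS
  have hip j : IsSemiInnerProduct (ip j) := ⟨hadd j, hsmul j, hsymm j, hnonneg j⟩
  set K := ∑ j : Fin (k + 1), (2 * D j ^ 2 + 2 * (j : ℝ) ^ 2 * (1 + ∑ i, C i))
  refine ⟨√K + 1, by positivity, ?_⟩
  rintro n φ hφ rfl horth z hz
  have hz2 : ‖z‖ ^ 2 ≤ K :=
    (isSemiInnerProduct_sobolevForm hip).norm_sq_le_of_isRoot
      (fun _ hp => re_sobolevForm_self_pos hnonneg hdef0 hp)
      (re_sobolevForm_X_mul_le hip (fun j => (hCpos j).le) hdom hbound) hφ horth hz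
  linarith [Real.le_sqrt_of_sq_le hz2]

/-- Under sequential domination and boundedness of each multiplication
operator, the set of all zeros of all Sobolev orthogonal polynomials for
`⟨p,q⟩_S = Σ_j ⟨p⁽ʲ⁾, q⁽ʲ⁾⟩_j` is bounded in ℂ. -/
theorem stmt_6 (k : ℕ) (ip : Fin (k + 1) → Polynomial ℂ → Polynomial ℂ → ℂ)
    (hadd : ∀ j, ∀ p q r : Polynomial ℂ, ip j (p + q) r = ip j p r + ip j q r)
    (hsmul : ∀ j, ∀ (a : ℂ) (p q : Polynomial ℂ), ip j (a • p) q = a * ip j p q)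
    (hsymm : ∀ j, ∀ p q : Polynomial ℂ, ip j q p = (starRingEnd ℂ) (ip j p q))
    (hnonneg : ∀ j, ∀ p : Polynomial ℂ, 0 ≤ (ip j p p).re)
    (hdef0 : ∀ p : Polynomial ℂ, p ≠ 0 → 0 < (ip 0 p p).re)
    (C : Fin k → ℝ) (hCpos : ∀ j, 0 < C j)
    (hdom : ∀ j : Fin k, ∀ p : Polynomial ℂ,
      (ip j.succ p p).re ≤ C j * (ip j.castSucc p p).re)
    (D : Fin (k + 1) → ℝ) (hDpos : ∀ j, 0 ≤ D j)
    (hbound : ∀ j, ∀ p : Polynomial ℂ,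
      (ip j (X * p) (X * p)).re ≤ (D j) ^ 2 * (ip j p p).re)
    (S : Polynomial ℂ → Polynomial ℂ → ℂ)
    (hS : ∀ p q : Polynomial ℂ,
      S p q = ∑ j : Fin (k + 1), ip j (derivative^[j.val] p) (derivative^[j.val] q)) :
    ∃ R : ℝ, 0 < R ∧ ∀ (n : ℕ) (φ : Polynomial ℂ), φ ≠ 0 → φ.natDegree = n →
      (∀ q : Polynomial ℂ, q.degree < n → S φ q = 0) →
      ∀ z₀ : ℂ, φ.eval z₀ = 0 → ‖z₀‖ < R :=
  stmt_6_general k ip hadd hsmul hsymm hnonneg hdef0 C hCpos hdom D hbound S hS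
end

section
/- Let μ be a positive Borel measure on ℂ with compact infinite support, and let βₙ be the largest eigenvalue of the (n+1)×(n+1) truncation of the moment matrix M(μ). If lim_{n→∞} βₙ < ∞, then the multiplication operator is bounded for the Sobolev inner product ⟨p,q⟩_S = ∫ p q̄ dm + ∫ p' q̄' dμ, where m is the normalized Lebesgue measure on the unit circle, and hence the zeros of the associated Sobolev orthogonal polynomials are uniformly bounded. -/
open Polynomial MeasureTheory Filter Real

set_option maxRecDepth 8000

/-- The (closed) support of a measure on ℂ: points all of whose neighbourhoods have
positive measure. -/
def msupp (ν : MeasureTheory.Measure ℂ) : Set ℂ := {z | ∀ U ∈ nhds z, ν U ≠ 0}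

noncomputable def mex : ℝ → ℂ := fun θ : ℝ => Complex.exp (θ * Complex.I)

noncomputable def mm : Measure ℂ :=
  Measure.map mex ((ENNReal.ofReal (2 * π))⁻¹ • volume.restrict (Set.Ioc (0 : ℝ) (2 * π)))

lemma mex_cont : Continuous mex := by
  unfold mex
  exact Complex.continuous_exp.comp (by continuity)

lemma integral_mm {E : Type*} [NormedAddCommGroup E] [NormedSpace ℝ E]
    (f : ℂ → E) (hf : Continuous f) :
    ∫ z, f z ∂mm = (2 * π)⁻¹ • ∫ θ in (0:ℝ)..(2 * π), f (mex θ) := by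
  rw [mm, integral_map mex_cont.aemeasurable hf.aestronglyMeasurable,
    integral_smul_measure, intervalIntegral.integral_of_le (by positivity : (0:ℝ) ≤ 2 * π)]
  congr 1
  rw [ENNReal.toReal_inv, ENNReal.toReal_ofReal (by positivity)]

lemma integral_exp_jk (j k : ℕ) :
    ∫ θ in (0:ℝ)..(2 * π), Complex.exp (((j:ℂ) - k) * (θ * Complex.I))
      = if j = k then (2 * π : ℂ) else 0 := by
  by_cases h : j = k
  · simp [h]
  · have hc : ((j:ℂ) - k) * Complex.I ≠ 0 := by
      exact mul_ne_zero (sub_ne_zero.2 (by exact_mod_cast h)) Complex.I_ne_zero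
    have : ∀ θ : ℝ, ((j:ℂ) - k) * (θ * Complex.I) = (((j:ℂ) - k) * Complex.I) * θ := by
      intro θ; ring
    simp only [this]
    rw [integral_exp_mul_complex hc, if_neg h]
    have : (((j:ℂ) - k) * Complex.I) * (2*π : ℝ) = ((j - k : ℤ) : ℂ) * (2 * π * Complex.I) := by
      push_cast; ring
    rw [this, Complex.exp_int_mul_two_pi_mul_I]
    simp

lemma eval_mex (p : Polynomial ℂ) (n : ℕ) (hn : p.natDegree ≤ n) (θ : ℝ) :
    p.eval (mex θ) = ∑ j ∈ Finset.range (n+1), p.coeff j * Complex.exp (j * (θ * Complex.I)) := by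
  rw [eval_eq_sum_range' (lt_of_le_of_lt hn (Nat.lt_succ_self n))]
  refine Finset.sum_congr rfl fun j _ => ?_
  rw [mex, ← Complex.exp_nat_mul]

lemma interval_parseval (p : Polynomial ℂ) (n : ℕ) (hn : p.natDegree ≤ n) :
    ∫ θ in (0:ℝ)..(2 * π), p.eval (mex θ) * (starRingEnd ℂ) (p.eval (mex θ))
      = (2 * π) * ∑ i ∈ Finset.range (n+1), (‖p.coeff i‖ ^ 2 : ℝ) := by
  have key : ∀ θ : ℝ, p.eval (mex θ) * (starRingEnd ℂ) (p.eval (mex θ))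
      = ∑ j ∈ Finset.range (n+1), ∑ k ∈ Finset.range (n+1),
          p.coeff j * (starRingEnd ℂ) (p.coeff k) * Complex.exp (((j:ℂ) - k) * (θ * Complex.I)) := by
    intro θ
    rw [eval_mex p n hn θ, map_sum, Finset.sum_mul_sum]
    refine Finset.sum_congr rfl fun j _ => Finset.sum_congr rfl fun k _ => ?_
    rw [map_mul, ← Complex.exp_conj]
    have : (starRingEnd ℂ) ((k:ℂ) * (θ * Complex.I)) = -((k:ℂ) * (θ * Complex.I)) := by
      simp [Complex.conj_I]
    rw [this, mul_mul_mul_comm, ← Complex.exp_add]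
    congr 1
    ring
  simp only [key]
  rw [intervalIntegral.integral_finset_sum]
  · have : ∀ j ∈ Finset.range (n+1),
        (∫ θ in (0:ℝ)..(2 * π), ∑ k ∈ Finset.range (n+1),
          p.coeff j * (starRingEnd ℂ) (p.coeff k) * Complex.exp (((j:ℂ) - k) * (θ * Complex.I)))
        = (2 * π) * (‖p.coeff j‖ ^ 2 : ℝ) := by
      intro j hj
      rw [intervalIntegral.integral_finset_sum]
      · have : ∀ k ∈ Finset.range (n+1),
            (∫ θ in (0:ℝ)..(2 * π),
              p.coeff j * (starRingEnd ℂ) (p.coeff k) * Complex.exp (((j:ℂ) - k) * (θ * Complex.I)))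
            = if j = k then (2 * π : ℂ) * (p.coeff j * (starRingEnd ℂ) (p.coeff j)) else 0 := by
          intro k _
          rw [intervalIntegral.integral_const_mul, integral_exp_jk]
          by_cases h : j = k <;> simp [h] <;> ring
        rw [Finset.sum_congr rfl this, Finset.sum_ite_eq, if_pos hj]
        simp [Complex.mul_conj, Complex.normSq_eq_norm_sq]
      · intro k _
        exact (Continuous.intervalIntegrable (by continuity) _ _)
    rw [Finset.sum_congr rfl this, ← Finset.mul_sum]
    push_cast
    ring_nf
  · intro j hj
    apply Continuous.intervalIntegrable
    continuity

lemma parseval_mm (p : Polynomial ℂ) (n : ℕ) (hn : p.natDegree ≤ n) :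
    ∫ z, ‖p.eval z‖ ^ 2 ∂mm = ∑ i ∈ Finset.range (n+1), ‖p.coeff i‖ ^ 2 := by
  rw [integral_mm (fun z => (‖p.eval z‖:ℝ) ^ 2) (by continuity)]
  have h2 : ((∫ θ in (0:ℝ)..(2*π), ‖p.eval (mex θ)‖^2 : ℝ) : ℂ)
      = ∫ θ in (0:ℝ)..(2*π), ((‖p.eval (mex θ)‖^2 : ℝ) : ℂ) :=
    (intervalIntegral.integral_ofReal).symm
  have h3 : ∀ θ : ℝ, ((‖p.eval (mex θ)‖^2 : ℝ) : ℂ)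
      = p.eval (mex θ) * (starRingEnd ℂ) (p.eval (mex θ)) := by
    intro θ
    rw [Complex.mul_conj]
    norm_cast
    rw [Complex.normSq_eq_norm_sq]
  replace h2 := h2.trans
    (intervalIntegral.integral_congr (g := fun θ : ℝ =>
      p.eval (mex θ) * (starRingEnd ℂ) (p.eval (mex θ))) (fun θ _ => h3 θ))
  rw [interval_parseval p n hn] at h2
  have h4 : (∫ θ in (0:ℝ)..(2*π), ‖p.eval (mex θ)‖^2 : ℝ)
      = (2 * π) * ∑ i ∈ Finset.range (n+1), ‖p.coeff i‖ ^ 2 := by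
    exact_mod_cast h2
  rw [h4, smul_eq_mul, ← mul_assoc, inv_mul_cancel₀ (by positivity : (2*π:ℝ) ≠ 0), one_mul]

lemma parseval_pos {p : Polynomial ℂ} (hp : p ≠ 0) :
    0 < ∑ i ∈ Finset.range (p.natDegree + 1), ‖p.coeff i‖ ^ 2 := by
  apply Finset.sum_pos'
  · intro i _; positivity
  · exact ⟨p.natDegree, Finset.self_mem_range_succ _, by
      have := Polynomial.leadingCoeff_ne_zero.2 hp
      have : ‖p.leadingCoeff‖ > 0 := norm_pos_iff.2 this
      exact pow_pos this 2⟩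

lemma integral_mm_nonneg (f : ℂ → ℝ) (hf : Continuous f) (h0 : ∀ z, 0 ≤ f z) :
    0 ≤ ∫ z, f z ∂mm := by
  rw [integral_mm f hf]
  have : (0:ℝ) ≤ ∫ θ in (0:ℝ)..(2*π), f (mex θ) :=
    intervalIntegral.integral_nonneg (by positivity) (fun θ _ => h0 _)
  have hπ : (0:ℝ) ≤ (2*π)⁻¹ := by positivity
  exact smul_nonneg hπ this

lemma ae_msupp (μ : Measure ℂ) (hfull : μ (msupp μ)ᶜ = 0) : ∀ᵐ z ∂μ, z ∈ msupp μ := by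
  rw [ae_iff]
  exact hfull

lemma integrable_msupp {E : Type*} [NormedAddCommGroup E]
    (μ : Measure ℂ) [IsFiniteMeasure μ] (hcmp : IsCompact (msupp μ))
    (hne : (msupp μ).Nonempty) (hfull : μ (msupp μ)ᶜ = 0)
    (f : ℂ → E) (hf : Continuous f) : Integrable f μ := by
  obtain ⟨z₀, _, hmax⟩ := hcmp.exists_isMaxOn hne hf.norm.continuousOn
  apply Integrable.mono' (integrable_const ‖f z₀‖) hf.aestronglyMeasurable
  filter_upwards [ae_msupp μ hfull] with z hz using hmax hz

lemma integrable_mm {E : Type*} [NormedAddCommGroup E] (f : ℂ → E) (hf : Continuous f) :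
    Integrable f mm := by
  rw [mm, integrable_map_measure hf.aestronglyMeasurable mex_cont.aemeasurable]
  apply Integrable.smul_measure
  · exact (hf.comp mex_cont).integrableOn_Ioc
  · exact ENNReal.inv_ne_top.2 (by positivity)

lemma cont_prod (p q : Polynomial ℂ) :
    Continuous (fun z : ℂ => p.eval z * (starRingEnd ℂ) (q.eval z)) :=
  (p.continuous).mul ((q.continuous).star)

noncomputable def SS (μ : Measure ℂ) (p q : Polynomial ℂ) : ℂ :=
  (∫ z, p.eval z * (starRingEnd ℂ) (q.eval z) ∂mm) +
    ∫ z, (derivative p).eval z * (starRingEnd ℂ) ((derivative q).eval z) ∂μ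

section SL
variable (μ : Measure ℂ) [IsFiniteMeasure μ] (hcmp : IsCompact (msupp μ))
  (hne : (msupp μ).Nonempty) (hfull : μ (msupp μ)ᶜ = 0)

lemma s_conj (p q : Polynomial ℂ) : SS μ q p = (starRingEnd ℂ) (SS μ p q) := by
  rw [SS, SS, map_add, ← integral_conj, ← integral_conj]
  congr 1 <;> · congr 1; ext z; simp [mul_comm]

include hcmp hne hfull in
lemma s_add_right (r p q : Polynomial ℂ) : SS μ r (p + q) = SS μ r p + SS μ r q := by
  rw [SS, SS, SS]
  have h1 : (∫ z, r.eval z * (starRingEnd ℂ) ((p+q).eval z) ∂mm)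
      = (∫ z, r.eval z * (starRingEnd ℂ) (p.eval z) ∂mm)
        + ∫ z, r.eval z * (starRingEnd ℂ) (q.eval z) ∂mm := by
    rw [← integral_add (integrable_mm _ (cont_prod r p)) (integrable_mm _ (cont_prod r q))]
    congr 1; ext z; simp [mul_add]
  have h2 : (∫ z, (derivative r).eval z * (starRingEnd ℂ) ((derivative (p+q)).eval z) ∂μ)
      = (∫ z, (derivative r).eval z * (starRingEnd ℂ) ((derivative p).eval z) ∂μ)
        + ∫ z, (derivative r).eval z * (starRingEnd ℂ) ((derivative q).eval z) ∂μ := by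
    rw [← integral_add (integrable_msupp μ hcmp hne hfull _ (cont_prod _ _))
      (integrable_msupp μ hcmp hne hfull _ (cont_prod _ _))]
    simp only [derivative_add]
    congr 1; ext z; simp [mul_add]
  rw [h1, h2]; ring

lemma s_smul_right (r p : Polynomial ℂ) (a : ℂ) :
    SS μ r (a • p) = (starRingEnd ℂ) a * SS μ r p := by
  rw [SS, SS, mul_add]
  congr 1
  · rw [← integral_const_mul ((starRingEnd ℂ) a)]
    congr 1; ext z; simp; ring
  · rw [← integral_const_mul ((starRingEnd ℂ) a)]
    simp only [derivative_smul]
    congr 1; ext z; simp; ring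
end SL

lemma integral_mul_conj_self (ν : Measure ℂ) (f : ℂ → ℂ) :
    ∫ z, f z * (starRingEnd ℂ) (f z) ∂ν = ((∫ z, ‖f z‖^2 ∂ν : ℝ) : ℂ) := by
  have h : ∀ z, f z * (starRingEnd ℂ) (f z) = ((‖f z‖^2 : ℝ) : ℂ) := fun z => by
    rw [Complex.mul_conj]; norm_cast; rw [Complex.normSq_eq_norm_sq]
  rw [integral_congr_ae (Filter.Eventually.of_forall h)]
  exact integral_ofReal

section SL2
variable (μ : Measure ℂ) [IsFiniteMeasure μ] (hcmp : IsCompact (msupp μ))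
  (hne : (msupp μ).Nonempty) (hfull : μ (msupp μ)ᶜ = 0)

lemma s_diag (p : Polynomial ℂ) :
    SS μ p p = (((∫ z, ‖p.eval z‖^2 ∂mm) + ∫ z, ‖(derivative p).eval z‖^2 ∂μ : ℝ) : ℂ) := by
  rw [SS, integral_mul_conj_self, integral_mul_conj_self]
  push_cast; ring

lemma s_re (p : Polynomial ℂ) :
    (SS μ p p).re = (∫ z, ‖p.eval z‖^2 ∂mm) + ∫ z, ‖(derivative p).eval z‖^2 ∂μ := by
  rw [s_diag]; exact Complex.ofReal_re _

lemma s_nonneg (p : Polynomial ℂ) : 0 ≤ (SS μ p p).re := by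
  rw [s_re]
  have h1 : 0 ≤ ∫ z, ‖p.eval z‖^2 ∂mm :=
    integral_mm_nonneg _ (by fun_prop) (fun z => by positivity)
  have h2 : 0 ≤ ∫ z, ‖(derivative p).eval z‖^2 ∂μ :=
    integral_nonneg (fun z => by positivity)
  linarith

lemma s_definite (p : Polynomial ℂ) (h : SS μ p p = 0) : p = 0 := by
  by_contra hp
  have hd := s_diag μ p
  rw [h] at hd
  have h0 : (∫ z, ‖p.eval z‖^2 ∂mm) + ∫ z, ‖(derivative p).eval z‖^2 ∂μ = 0 := by
    exact_mod_cast hd.symm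
  have h2 : 0 ≤ ∫ z, ‖(derivative p).eval z‖^2 ∂μ := integral_nonneg (fun z => by positivity)
  have h1 : ∫ z, ‖p.eval z‖^2 ∂mm = ∑ i ∈ Finset.range (p.natDegree+1), ‖p.coeff i‖^2 :=
    parseval_mm p p.natDegree le_rfl
  have := parseval_pos hp
  linarith
end SL2

section Beta
variable (μ : Measure ℂ) (β : ℕ → ℝ)
  (hβ : ∀ n : ℕ, IsLUB {r : ℝ | ∃ p : Polynomial ℂ, p ≠ 0 ∧ p.degree ≤ n ∧
      r = (∫ z, ‖p.eval z‖ ^ 2 ∂μ) / ∑ i ∈ Finset.range (n + 1), ‖p.coeff i‖ ^ 2} (β n))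

include hβ in
lemma beta_mono : Monotone β := by
  apply monotone_nat_of_le_succ
  intro n
  refine (hβ n).2 ?_
  rintro r ⟨p, hp, hdeg, hr⟩
  have hnd : p.natDegree ≤ n := (Polynomial.natDegree_le_iff_degree_le).2 hdeg
  refine (hβ (n+1)).1 ⟨p, hp, hdeg.trans (by exact_mod_cast Nat.cast_le.2 (Nat.le_succ n)), ?_⟩
  rw [hr]
  congr 1
  have hc : p.coeff (n+1) = 0 := Polynomial.coeff_eq_zero_of_natDegree_lt (by omega)
  symm
  rw [Finset.sum_range_succ, hc]
  simp

include hβ in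
lemma beta_le {L : ℝ} (hT : Tendsto β atTop (nhds L)) : ∀ n, β n ≤ L :=
  fun n => Monotone.ge_of_tendsto (beta_mono μ β hβ) hT n

include hβ in
lemma dominate {L : ℝ} (hT : Tendsto β atTop (nhds L)) (p : Polynomial ℂ) (n : ℕ)
    (hdeg : p.natDegree ≤ n) :
    ∫ z, ‖p.eval z‖ ^ 2 ∂μ ≤ L * ∑ i ∈ Finset.range (n + 1), ‖p.coeff i‖ ^ 2 := by
  by_cases hp : p = 0
  · simp [hp]
  · have hsum : 0 < ∑ i ∈ Finset.range (n + 1), ‖p.coeff i‖ ^ 2 := by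
      refine Finset.sum_pos' (fun i _ => by positivity) ⟨p.natDegree,
        Finset.mem_range.2 (Nat.lt_succ_of_le hdeg), ?_⟩
      have : p.coeff p.natDegree ≠ 0 := Polynomial.leadingCoeff_ne_zero.2 hp
      have : ‖p.coeff p.natDegree‖ > 0 := norm_pos_iff.2 this
      positivity
    have hmem : (∫ z, ‖p.eval z‖ ^ 2 ∂μ) / ∑ i ∈ Finset.range (n + 1), ‖p.coeff i‖ ^ 2
        ∈ {r : ℝ | ∃ p : Polynomial ℂ, p ≠ 0 ∧ p.degree ≤ n ∧
          r = (∫ z, ‖p.eval z‖ ^ 2 ∂μ) / ∑ i ∈ Finset.range (n + 1), ‖p.coeff i‖ ^ 2} :=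
      ⟨p, hp, Polynomial.degree_le_of_natDegree_le hdeg, rfl⟩
    have hle : (∫ z, ‖p.eval z‖ ^ 2 ∂μ) / ∑ i ∈ Finset.range (n + 1), ‖p.coeff i‖ ^ 2 ≤ L :=
      le_trans ((hβ n).1 hmem) (beta_le μ β hβ hT n)
    calc ∫ z, ‖p.eval z‖ ^ 2 ∂μ
        = ((∫ z, ‖p.eval z‖ ^ 2 ∂μ) / ∑ i ∈ Finset.range (n + 1), ‖p.coeff i‖ ^ 2)
          * ∑ i ∈ Finset.range (n + 1), ‖p.coeff i‖ ^ 2 := by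
          rw [div_mul_cancel₀ _ hsum.ne']
      _ ≤ L * ∑ i ∈ Finset.range (n + 1), ‖p.coeff i‖ ^ 2 :=
          mul_le_mul_of_nonneg_right hle hsum.le
end Beta

lemma mpart_X (p : Polynomial ℂ) :
    ∫ z, ‖(X*p).eval z‖^2 ∂mm = ∫ z, ‖p.eval z‖^2 ∂mm := by
  rw [integral_mm _ (by fun_prop), integral_mm _ (by fun_prop)]
  congr 1
  apply intervalIntegral.integral_congr
  intro θ _
  have h1 : ‖mex θ‖ = 1 := by
    simp [mex, Complex.norm_exp_ofReal_mul_I]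
  simp [norm_mul, mul_pow, h1]

lemma norm_add_sq_le (a b : ℂ) : ‖a + b‖^2 ≤ 2*‖a‖^2 + 2*‖b‖^2 := by
  have h1 := norm_add_le a b
  have h2 : (0:ℝ) ≤ ‖a‖ := norm_nonneg a
  have h3 : (0:ℝ) ≤ ‖b‖ := norm_nonneg b
  have h4 : (0:ℝ) ≤ ‖a+b‖ := norm_nonneg _
  nlinarith [sq_nonneg (‖a‖ - ‖b‖), sq_nonneg (‖a‖ + ‖b‖), mul_self_le_mul_self h4 h1]

lemma part1 (μ : Measure ℂ) [IsFiniteMeasure μ] (hcmp : IsCompact (msupp μ))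
    (hne : (msupp μ).Nonempty) (hfull : μ (msupp μ)ᶜ = 0) (L' M' : ℝ)
    (hL0 : 0 ≤ L') (hM0 : 0 ≤ M') (hM : ∀ z ∈ msupp μ, ‖z‖ ≤ M')
    (hdom : ∀ p : Polynomial ℂ, ∫ z, ‖p.eval z‖^2 ∂μ ≤ L' * ∫ z, ‖p.eval z‖^2 ∂mm)
    (p : Polynomial ℂ) :
    (SS μ (X*p) (X*p)).re ≤ (1 + 2*L' + 2*M'^2) * (SS μ p p).re := by
  rw [s_re, s_re, mpart_X]
  set A := ∫ z, ‖p.eval z‖^2 ∂mm with hA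
  set B := ∫ z, ‖(derivative p).eval z‖^2 ∂μ with hB
  have hA0 : 0 ≤ A := integral_mm_nonneg _ (by fun_prop) (fun z => by positivity)
  have hB0 : 0 ≤ B := integral_nonneg (fun z => by positivity)
  have hder : derivative (X*p) = p + X * derivative p := by
    rw [derivative_mul, derivative_X, one_mul]
  have hint1 : Integrable (fun z => ‖(derivative (X*p)).eval z‖^2) μ :=
    integrable_msupp μ hcmp hne hfull _ (by fun_prop)
  have hint2 : Integrable (fun z => ‖p.eval z‖^2) μ :=
    integrable_msupp μ hcmp hne hfull _ (by fun_prop)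
  have hint3 : Integrable (fun z => ‖z * (derivative p).eval z‖^2) μ :=
    integrable_msupp μ hcmp hne hfull _ (by fun_prop)
  have hint4 : Integrable (fun z => ‖(derivative p).eval z‖^2) μ :=
    integrable_msupp μ hcmp hne hfull _ (by fun_prop)
  have step1 : ∫ z, ‖(derivative (X*p)).eval z‖^2 ∂μ
      ≤ ∫ z, (2*‖p.eval z‖^2 + 2*‖z * (derivative p).eval z‖^2) ∂μ := by
    apply integral_mono hint1 ((hint2.const_mul 2).add (hint3.const_mul 2))
    intro z
    simp only [hder, eval_add, eval_mul, eval_X]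
    exact norm_add_sq_le _ _
  have step2 : ∫ z, (2*‖p.eval z‖^2 + 2*‖z * (derivative p).eval z‖^2) ∂μ
      = 2 * (∫ z, ‖p.eval z‖^2 ∂μ) + 2 * ∫ z, ‖z * (derivative p).eval z‖^2 ∂μ := by
    rw [integral_add (hint2.const_mul 2) (hint3.const_mul 2),
      integral_const_mul, integral_const_mul]
  have step3 : ∫ z, ‖z * (derivative p).eval z‖^2 ∂μ ≤ M'^2 * B := by
    rw [hB, ← integral_const_mul]
    apply integral_mono_ae hint3 (hint4.const_mul _)
    filter_upwards [ae_msupp μ hfull] with z hz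
    have h1 : ‖z‖ ≤ M' := hM z hz
    have h2 : (0:ℝ) ≤ ‖(derivative p).eval z‖ := norm_nonneg _
    have h3 : (0:ℝ) ≤ ‖z‖ := norm_nonneg _
    calc ‖z * (derivative p).eval z‖^2 = ‖z‖^2 * ‖(derivative p).eval z‖^2 := by
          rw [norm_mul, mul_pow]
      _ ≤ M'^2 * ‖(derivative p).eval z‖^2 := by
          have hz2 : ‖z‖^2 ≤ M'^2 := by nlinarith
          exact mul_le_mul_of_nonneg_right hz2 (by positivity)
  have step4 : ∫ z, ‖p.eval z‖^2 ∂μ ≤ L' * A := hdom p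
  nlinarith [hdom p, mul_nonneg hL0 hA0, mul_nonneg (mul_nonneg hM0 hM0) hB0]

lemma s_cs (μ : Measure ℂ) [IsFiniteMeasure μ] (hcmp : IsCompact (msupp μ))
    (hne : (msupp μ).Nonempty) (hfull : μ (msupp μ)ᶜ = 0) (u v : Polynomial ℂ) :
    ‖SS μ u v‖^2 ≤ (SS μ u u).re * (SS μ v v).re := by
  letI core : PreInnerProductSpace.Core ℂ (Polynomial ℂ) :=
    { inner := fun p q => SS μ q p
      conj_inner_symm := fun x y => (s_conj μ x y).symm
      re_inner_nonneg := fun x => s_nonneg μ x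
      add_left := fun x y z => s_add_right μ hcmp hne hfull z x y
      smul_left := fun x y r => s_smul_right μ y x r }
  have h := InnerProductSpace.Core.inner_mul_inner_self_le (𝕜 := ℂ) (F := Polynomial ℂ) v u
  have h2 : ‖SS μ v u‖ = ‖SS μ u v‖ := by
    rw [s_conj μ u v, RCLike.norm_conj]
  calc ‖SS μ u v‖^2 = ‖SS μ u v‖ * ‖SS μ v u‖ := by rw [h2, sq]
    _ ≤ (SS μ v v).re * (SS μ u u).re := h
    _ = (SS μ u u).re * (SS μ v v).re := mul_comm _ _

lemma part2 (μ : Measure ℂ) [IsFiniteMeasure μ] (hcmp : IsCompact (msupp μ))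
    (hne : (msupp μ).Nonempty) (hfull : μ (msupp μ)ᶜ = 0) (K : ℝ) (hK : 0 < K)
    (hbound : ∀ p : Polynomial ℂ, (SS μ (X*p) (X*p)).re ≤ K^2 * (SS μ p p).re)
    (n : ℕ) (φ : Polynomial ℂ) (hφ : φ ≠ 0) (hdeg : φ.natDegree = n)
    (horth : ∀ q : Polynomial ℂ, q.degree < (n : WithBot ℕ) → SS μ φ q = 0)
    (z₀ : ℂ) (hroot : φ.eval z₀ = 0) : ‖z₀‖ < K + 1 := by
  rcases Nat.eq_zero_or_pos n with hn | hn
  · exfalso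
    apply hφ
    have h0 : φ = C (φ.coeff 0) := Polynomial.eq_C_of_natDegree_eq_zero (hdeg.trans hn)
    rw [h0] at hroot
    rw [eval_C] at hroot
    rw [h0, hroot, map_zero]
  · obtain ⟨q, hq⟩ := (Polynomial.dvd_iff_isRoot).2 hroot
    have hqne : q ≠ 0 := by
      rintro rfl; exact hφ (by simpa using hq)
    have hqd : q.natDegree = n - 1 := by
      have := Polynomial.natDegree_mul (Polynomial.X_sub_C_ne_zero z₀) hqne
      rw [← hq, Polynomial.natDegree_X_sub_C, hdeg] at this
      omega
    have hqdeg : q.degree < (n : WithBot ℕ) := by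
      refine lt_of_le_of_lt (Polynomial.degree_le_natDegree) ?_
      exact_mod_cast Nat.cast_lt.2 (by omega : q.natDegree < n)
    -- X * q = φ + z₀ • q
    have hXq : X * q = φ + z₀ • q := by
      rw [hq, Polynomial.smul_eq_C_mul]; ring
    -- left linearity via conj
    have hlin : SS μ (X * q) q = z₀ * SS μ q q := by
      rw [hXq, s_conj, s_add_right μ hcmp hne hfull, s_smul_right, map_add, map_mul,
        RCLike.conj_conj, ← s_conj, ← s_conj, horth q hqdeg, zero_add]
    -- B := (SS q q).re
    set B := (SS μ q q).re with hB
    have hB0 : 0 ≤ B := s_nonneg μ q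
    have hreal : SS μ q q = (B : ℂ) := by
      rw [s_diag μ q, hB, s_re]
    have hBne : B ≠ 0 := by
      intro h0
      apply hqne
      exact s_definite μ q (by rw [hreal, h0, Complex.ofReal_zero])
    have hBpos : 0 < B := lt_of_le_of_ne hB0 (Ne.symm hBne)
    have hcs := s_cs μ hcmp hne hfull (X * q) q
    rw [hlin] at hcs
    have hnorm : ‖z₀ * SS μ q q‖ = ‖z₀‖ * B := by
      rw [norm_mul, hreal, Complex.norm_real, Real.norm_eq_abs, abs_of_pos hBpos]
    rw [hnorm] at hcs
    have hXqq := hbound q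
    have hfin : (‖z₀‖ * B)^2 ≤ K^2 * B^2 := by
      calc (‖z₀‖ * B)^2 ≤ (SS μ (X*q) (X*q)).re * B := hcs
        _ ≤ K^2 * (SS μ q q).re * B := mul_le_mul_of_nonneg_right hXqq hB0
        _ = K^2 * B^2 := by rw [← hB]; ring
    have h1 : ‖z₀‖^2 * B^2 ≤ K^2 * B^2 := by nlinarith [hfin]
    have h2 : ‖z₀‖^2 ≤ K^2 := (mul_le_mul_iff_of_pos_right (by positivity : (0:ℝ) < B^2)).mp h1
    have hz : ‖z₀‖ ≤ K := (pow_le_pow_iff_left₀ (norm_nonneg _) hK.le (by norm_num)).mp h2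
    linarith

/-- If `μ` has compact infinite support and the largest eigenvalues `βₙ`
of the truncated moment matrices of `μ` have a finite limit, then the multiplication
operator is bounded for `⟨p,q⟩_S = ∫ p q̄ dm + ∫ p' q̄' dμ` (`m` normalized Lebesgue
measure on the unit circle), and the zeros of the Sobolev orthogonal polynomials are
uniformly bounded. -/
theorem stmt_11 (μ : Measure ℂ) [IsFiniteMeasure μ]
    (hcmp : IsCompact (msupp μ)) (hinf : (msupp μ).Infinite)
    (hfull : μ (msupp μ)ᶜ = 0)
    (β : ℕ → ℝ)
    (hβ : ∀ n : ℕ, IsLUB {r : ℝ | ∃ p : Polynomial ℂ, p ≠ 0 ∧ p.degree ≤ n ∧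
      r = (∫ z, ‖p.eval z‖ ^ 2 ∂μ) / ∑ i ∈ Finset.range (n + 1), ‖p.coeff i‖ ^ 2} (β n))
    (hβfin : ∃ L : ℝ, Tendsto β atTop (nhds L))
    (m : Measure ℂ)
    (hm : m = Measure.map (fun θ : ℝ => Complex.exp (θ * Complex.I))
      ((ENNReal.ofReal (2 * π))⁻¹ • volume.restrict (Set.Ioc (0 : ℝ) (2 * π))))
    (S : Polynomial ℂ → Polynomial ℂ → ℂ)
    (hS : ∀ p q : Polynomial ℂ, S p q =
      (∫ z, p.eval z * (starRingEnd ℂ) (q.eval z) ∂m) +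
      ∫ z, (derivative p).eval z * (starRingEnd ℂ) ((derivative q).eval z) ∂μ) :
    (∃ K : ℝ, 0 < K ∧ ∀ p : Polynomial ℂ,
        (S (X * p) (X * p)).re ≤ K ^ 2 * (S p p).re) ∧
      ∃ R : ℝ, 0 < R ∧ ∀ (n : ℕ) (φ : Polynomial ℂ), φ ≠ 0 → φ.natDegree = n →
        (∀ q : Polynomial ℂ, q.degree < n → S φ q = 0) →
        ∀ z₀ : ℂ, φ.eval z₀ = 0 → ‖z₀‖ < R := by
  have hne : (msupp μ).Nonempty := hinf.nonempty
  obtain ⟨L, hT⟩ := hβfin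
  obtain ⟨M, hM⟩ := hcmp.isBounded.exists_norm_le
  set L' : ℝ := max L 0 with hL'
  set M' : ℝ := max M 0 with hM'
  have hL0 : 0 ≤ L' := le_max_right _ _
  have hM0 : 0 ≤ M' := le_max_right _ _
  have hMle : ∀ z ∈ msupp μ, ‖z‖ ≤ M' := fun z hz => (hM z hz).trans (le_max_left _ _)
  have hSS : ∀ p q : Polynomial ℂ, S p q = SS μ p q := by
    intro p q
    rw [hS, hm]
    rfl
  have hdom : ∀ p : Polynomial ℂ, ∫ z, ‖p.eval z‖^2 ∂μ ≤ L' * ∫ z, ‖p.eval z‖^2 ∂mm := by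
    intro p
    rw [parseval_mm p p.natDegree le_rfl]
    have hsum0 : (0:ℝ) ≤ ∑ i ∈ Finset.range (p.natDegree + 1), ‖p.coeff i‖ ^ 2 :=
      Finset.sum_nonneg (fun i _ => by positivity)
    calc ∫ z, ‖p.eval z‖^2 ∂μ
        ≤ L * ∑ i ∈ Finset.range (p.natDegree + 1), ‖p.coeff i‖ ^ 2 :=
          dominate μ β hβ hT p p.natDegree le_rfl
      _ ≤ L' * ∑ i ∈ Finset.range (p.natDegree + 1), ‖p.coeff i‖ ^ 2 :=
          mul_le_mul_of_nonneg_right (le_max_left _ _) hsum0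
  set K : ℝ := Real.sqrt (1 + 2*L' + 2*M'^2) with hKdef
  have hKpos : 0 < K := Real.sqrt_pos.2 (by positivity)
  have hK2 : K^2 = 1 + 2*L' + 2*M'^2 := Real.sq_sqrt (by positivity)
  have hboundSS : ∀ p : Polynomial ℂ, (SS μ (X*p) (X*p)).re ≤ K^2 * (SS μ p p).re := by
    intro p
    rw [hK2]
    exact part1 μ hcmp hne hfull L' M' hL0 hM0 hMle hdom p
  constructor
  · exact ⟨K, hKpos, fun p => by rw [hSS, hSS]; exact hboundSS p⟩
  · refine ⟨K + 1, by positivity, ?_⟩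
    intro n φ hφ hdeg horth z₀ hroot
    exact part2 μ hcmp hne hfull K hKpos hboundSS n φ hφ hdeg
      (fun q hq => by rw [← hSS]; exact horth q hq) z₀ hroot
end
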